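/- arXiv:2105.08868 — 2 statements merged into one kernel-verified Lean document; each statement's English description precedes it below -/
import Mathlib

section
/- (Lemma 2.) Under the mth-order Markov model, for every integer k with 1 ≤ k ≤ K − m − 1, the response indicator Rₖ is conditionally independent of O_{k+m+1} given (Ȳ^{m+1}_{k+1}, O̲ᵐₖ) = (Y_{max(1,k−m)},…,Yₖ, O_{k+1},…,O_{k+m}). -/
open scoped Classical BigOperators

namespace MRM

/-- Observed datum at index `j`: `some (y j)` if `r j = true` (observed), otherwise `none`
(missing, i.e. the value `?`). -/
def obs {K : ℕ} (y r : Fin K → Bool) (j : Fin K) : Option Bool :=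
  if r j then some (y j) else none

/-- Probability of an event under the joint pmf `p` on outcomes and response indicators. -/
noncomputable def Pr {K : ℕ} (p : (Fin K → Bool) → (Fin K → Bool) → ℝ)
    (E : (Fin K → Bool) → (Fin K → Bool) → Prop) : ℝ :=
  ∑ y : Fin K → Bool, ∑ r : Fin K → Bool, if E y r then p y r else 0

/-- Conditional probability `P(A | C)` under `p`. -/
noncomputable def cPr {K : ℕ} (p : (Fin K → Bool) → (Fin K → Bool) → ℝ)
    (A C : (Fin K → Bool) → (Fin K → Bool) → Prop) : ℝ :=
  Pr p (fun y r => A y r ∧ C y r) / Pr p C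

/-- Event: the outcomes at the 1-based positions `lo ≤ pos ≤ hi` take the values `yv pos`.
(If `hi < lo`, or the window is out of range, this is the trivial event, matching the
convention that a vector whose lower index exceeds its upper index is the null vector.) -/
def Yeq {K : ℕ} (lo hi : ℕ) (yv : ℕ → Bool) :
    (Fin K → Bool) → (Fin K → Bool) → Prop :=
  fun y _ => ∀ j : Fin K, lo ≤ j.1 + 1 → j.1 + 1 ≤ hi → y j = yv (j.1 + 1)

/-- Event: the response indicators at positions `lo ≤ pos ≤ hi` take the values `rv pos`. -/
def Req {K : ℕ} (lo hi : ℕ) (rv : ℕ → Bool) :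
    (Fin K → Bool) → (Fin K → Bool) → Prop :=
  fun _ r => ∀ j : Fin K, lo ≤ j.1 + 1 → j.1 + 1 ≤ hi → r j = rv (j.1 + 1)

/-- Event: the observed data at positions `lo ≤ pos ≤ hi` take the values `ov pos`. -/
def Oeq {K : ℕ} (lo hi : ℕ) (ov : ℕ → Option Bool) :
    (Fin K → Bool) → (Fin K → Bool) → Prop :=
  fun y r => ∀ j : Fin K, lo ≤ j.1 + 1 → j.1 + 1 ≤ hi → obs y r j = ov (j.1 + 1)

/-- The `m`-th order Markov model:
`p(y, r) = ∏ₖ aₖ(yₖ | ȳᵐₖ) · bₖ(rₖ | ȳᵐₖ, yₖ, o̲ᵐₖ)`, where `aₖ` and `bₖ` are strictly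
positive conditional pmfs in their first argument, `aₖ` depends only on the outcomes at
1-based positions `max(1, k − m), …, k`, and `bₖ` depends only on `rₖ`, the outcomes at
positions `max(1, k − m), …, k` and the observed data at positions `k + 1, …, min(k + m, K)`.
Indices of `Fin K` are 0-based, so the 1-based paper position of `k : Fin K` is `k.1 + 1`. -/
structure Markov (K m : ℕ) where
  p : (Fin K → Bool) → (Fin K → Bool) → ℝ
  a : Fin K → (Fin K → Bool) → ℝ
  b : Fin K → (Fin K → Bool) → (Fin K → Bool) → ℝ
  a_pos : ∀ k y, 0 < a k y
  b_pos : ∀ k y r, 0 < b k y r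
  a_pmf : ∀ (k : Fin K) (y : Fin K → Bool), ∑ v : Bool, a k (Function.update y k v) = 1
  b_pmf : ∀ (k : Fin K) (y r : Fin K → Bool), ∑ v : Bool, b k y (Function.update r k v) = 1
  a_local : ∀ (k : Fin K) (y y' : Fin K → Bool),
    (∀ j : Fin K, k.1 + 1 - m ≤ j.1 + 1 → j.1 ≤ k.1 → y j = y' j) → a k y = a k y'
  b_local : ∀ (k : Fin K) (y r y' r' : Fin K → Bool), r k = r' k →
    (∀ j : Fin K, k.1 + 1 - m ≤ j.1 + 1 → j.1 ≤ k.1 → y j = y' j) →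
    (∀ j : Fin K, k.1 < j.1 → j.1 + 1 ≤ k.1 + 1 + m → obs y r j = obs y' r' j) →
    b k y r = b k y' r'
  factor : ∀ y r, p y r = ∏ k : Fin K, a k y * b k y r
  sum_one : ∑ y : Fin K → Bool, ∑ r : Fin K → Bool, p y r = 1

/-- Real value of a binary outcome. -/
def yVal (v : Bool) : ℝ := if v then 1 else 0

/-- `cₖ(ȳᵐₖ, o̲ᵐₖ; α) = E[exp(α Yₖ) | Rₖ = 1, Ȳᵐₖ = ȳᵐₖ, O̲ᵐₖ = o̲ᵐₖ]` (`k` is 1-based). -/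
noncomputable def cfun {K : ℕ} (p : (Fin K → Bool) → (Fin K → Bool) → ℝ) (m : ℕ) (α : ℝ)
    (k : ℕ) (yv : ℕ → Bool) (ov : ℕ → Option Bool) : ℝ :=
  ∑ v : Bool, Real.exp (α * yVal v) *
    cPr p (Yeq k k (fun _ => v))
      (fun y r => Req k k (fun _ => true) y r ∧ Yeq (k - m) (k - 1) yv y r ∧
        Oeq (k + 1) (k + m) ov y r)

/-- The exponential tilting restriction with sensitivity parameters `α k` (`k` is 1-based):
`f(Yₖ | Rₖ = 0, Ȳᵐₖ, O̲ᵐₖ) = f(Yₖ | Rₖ = 1, Ȳᵐₖ, O̲ᵐₖ) · exp(αₖ Yₖ) / cₖ(Ȳᵐₖ, O̲ᵐₖ; αₖ)`. -/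
def Tilt {K : ℕ} (p : (Fin K → Bool) → (Fin K → Bool) → ℝ) (m : ℕ) (α : ℕ → ℝ) : Prop :=
  ∀ (k : ℕ), 1 ≤ k → k ≤ K → ∀ (yv : ℕ → Bool) (ov : ℕ → Option Bool),
    cPr p (Yeq k k yv)
      (fun y r => Req k k (fun _ => false) y r ∧ Yeq (k - m) (k - 1) yv y r ∧
        Oeq (k + 1) (k + m) ov y r)
    = cPr p (Yeq k k yv)
        (fun y r => Req k k (fun _ => true) y r ∧ Yeq (k - m) (k - 1) yv y r ∧
          Oeq (k + 1) (k + m) ov y r)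
      * Real.exp (α k * yVal (yv k)) / cfun p m (α k) k yv ov


/-! Cut every configuration at `k`: the factors `aₜ bₜ` with `t ≤ k` see only the past `(Y, R)`
at positions `≤ k` and the observations `O_{k+1}, …, O_{k+m}`, and those with `t > k` see only
the future at positions `> k` and the outcomes `Y_{k−m}, …, Y_k`. So if two configurations agree
on the conditioning window `(Y_{k−m}, …, Y_k, O_{k+1}, …, O_{k+m})`, exchanging their futures
preserves the product of their probabilities. Summing over pairs of configurations, this exchange
turns `P(Rₖ, O_{k+m+1}, window) · P(window)` into `P(Rₖ, window) · P(O_{k+m+1}, window)`. -/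

section Splice

variable {K : ℕ}

def splice (k : ℕ) (x x' : Fin K → Bool) (j : Fin K) : Bool :=
  if j.1 < k then x j else x' j

lemma splice_of_lt {k : ℕ} {x x' : Fin K → Bool} {j : Fin K} (h : j.1 < k) :
    splice k x x' j = x j := if_pos h

lemma splice_of_not_lt {k : ℕ} {x x' : Fin K → Bool} {j : Fin K} (h : ¬ j.1 < k) :
    splice k x x' j = x' j := if_neg h

@[simp]
lemma splice_splice_splice (k : ℕ) (x x' : Fin K → Bool) :
    splice k (splice k x x') (splice k x' x) = x := by
  funext j; by_cases h : j.1 < k <;> simp [splice, h]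

lemma obs_splice_of_lt {k : ℕ} {y r y' r' : Fin K → Bool} {j : Fin K} (h : j.1 < k) :
    obs (splice k y y') (splice k r r') j = obs y r j := by
  simp [obs, splice, h]

lemma obs_splice_of_not_lt {k : ℕ} {y r y' r' : Fin K → Bool} {j : Fin K} (h : ¬ j.1 < k) :
    obs (splice k y y') (splice k r r') j = obs y' r' j := by
  simp [obs, splice, h]

def IsPastEvent (k : ℕ) (E : (Fin K → Bool) → (Fin K → Bool) → Prop) : Prop :=
  ∀ y r y' r', E (splice k y y') (splice k r r') ↔ E y r

def IsFutureEvent (k : ℕ) (E : (Fin K → Bool) → (Fin K → Bool) → Prop) : Prop :=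
  ∀ y r y' r', E (splice k y y') (splice k r r') ↔ E y' r'

lemma isPastEvent_Yeq {k lo hi : ℕ} (hhi : hi ≤ k) (yv : ℕ → Bool) :
    IsPastEvent k (Yeq (K := K) lo hi yv) := by
  intro y r y' r'
  refine forall_congr' fun j => imp_congr_right fun _ => forall_congr' fun hj => ?_
  rw [splice_of_lt (by omega)]

lemma isPastEvent_Req {k lo hi : ℕ} (hhi : hi ≤ k) (rv : ℕ → Bool) :
    IsPastEvent k (Req (K := K) lo hi rv) := by
  intro y r y' r'
  refine forall_congr' fun j => imp_congr_right fun _ => forall_congr' fun hj => ?_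
  rw [splice_of_lt (by omega)]

lemma isFutureEvent_Oeq {k lo hi : ℕ} (hlo : k + 1 ≤ lo) (ov : ℕ → Option Bool) :
    IsFutureEvent k (Oeq (K := K) lo hi ov) := by
  intro y r y' r'
  refine forall_congr' fun j => forall_congr' fun hj => imp_congr_right fun _ => ?_
  rw [obs_splice_of_not_lt (by omega)]

end Splice

section PairSums

variable {K : ℕ} (p : (Fin K → Bool) → (Fin K → Bool) → ℝ)

lemma Pr_mul_Pr (E F : (Fin K → Bool) → (Fin K → Bool) → Prop) :
    Pr p E * Pr p F
      = ∑ z : ((Fin K → Bool) × (Fin K → Bool)) × ((Fin K → Bool) × (Fin K → Bool)),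
          if E z.1.1 z.1.2 ∧ F z.2.1 z.2.2 then p z.1.1 z.1.2 * p z.2.1 z.2.2 else 0 := by
  simp only [Pr, Finset.sum_mul]
  simp only [Finset.mul_sum, Fintype.sum_prod_type, ite_zero_mul_ite_zero]

lemma Pr_and_mul_Pr_eq_of_splice (k : ℕ) {A B Cp Cf : (Fin K → Bool) → (Fin K → Bool) → Prop}
    (hA : IsPastEvent k A) (hB : IsFutureEvent k B)
    (hCp : IsPastEvent k Cp) (hCf : IsFutureEvent k Cf)
    (hp : ∀ y r y' r', Cp y r ∧ Cf y r → Cp y' r' ∧ Cf y' r' →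
      p (splice k y y') (splice k r r') * p (splice k y' y) (splice k r' r) = p y r * p y' r') :
    Pr p (fun y r => (A y r ∧ B y r) ∧ Cp y r ∧ Cf y r) * Pr p (fun y r => Cp y r ∧ Cf y r)
      = Pr p (fun y r => A y r ∧ Cp y r ∧ Cf y r) * Pr p (fun y r => B y r ∧ Cp y r ∧ Cf y r) := by
  rw [Pr_mul_Pr, Pr_mul_Pr]
  let exchange (z : ((Fin K → Bool) × (Fin K → Bool)) × ((Fin K → Bool) × (Fin K → Bool))) :
      ((Fin K → Bool) × (Fin K → Bool)) × ((Fin K → Bool) × (Fin K → Bool)) :=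
    ((splice k z.1.1 z.2.1, splice k z.1.2 z.2.2), (splice k z.2.1 z.1.1, splice k z.2.2 z.1.2))
  have hinv : Function.Involutive exchange := fun z => by simp [exchange]
  refine Fintype.sum_equiv hinv.toPerm _ _ fun ⟨⟨y, r⟩, y', r'⟩ => ?_
  simp only [Function.Involutive.coe_toPerm, exchange, hA y r y' r', hB y' r' y r,
    hCp y r y' r', hCf y r y' r', hCp y' r' y r, hCf y' r' y r]
  by_cases h : ((A y r ∧ B y r) ∧ Cp y r ∧ Cf y r) ∧ Cp y' r' ∧ Cf y' r'
  · rw [if_pos h, if_pos (by tauto), hp y r y' r' h.1.2 h.2]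
  · rw [if_neg h, if_neg (by tauto)]

end PairSums

lemma cPr_and_eq_mul_of_Pr_mul_Pr {K : ℕ} {p : (Fin K → Bool) → (Fin K → Bool) → ℝ}
    {A B C : (Fin K → Bool) → (Fin K → Bool) → Prop}
    (h : Pr p (fun y r => (A y r ∧ B y r) ∧ C y r) * Pr p C
      = Pr p (fun y r => A y r ∧ C y r) * Pr p (fun y r => B y r ∧ C y r)) :
    cPr p (fun y r => A y r ∧ B y r) C = cPr p A C * cPr p B C := by
  rcases eq_or_ne (Pr p C) 0 with hC | hC
  · simp [cPr, hC]
  · rw [cPr, cPr, cPr, div_mul_div_comm, div_eq_div_iff hC (mul_ne_zero hC hC), ← h]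
    ring

namespace Markov

variable {K m : ℕ} (M : Markov K m)

lemma factor_splice_of_lt {k : ℕ} {t : Fin K} (ht : t.1 < k) {y r y' r' : Fin K → Bool}
    (hO : ∀ j : Fin K, k ≤ j.1 → j.1 < k + m → obs y' r' j = obs y r j) :
    M.a t (splice k y y') * M.b t (splice k y y') (splice k r r') = M.a t y * M.b t y r := by
  have hpast : ∀ j : Fin K, t.1 + 1 - m ≤ j.1 + 1 → j.1 ≤ t.1 → splice k y y' j = y j :=
    fun j _ hj => splice_of_lt (by omega)
  rw [M.a_local t _ _ hpast, M.b_local t _ _ _ _ (splice_of_lt ht) hpast fun j htj hj => ?_]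
  by_cases hjk : j.1 < k
  · exact obs_splice_of_lt hjk
  · rw [obs_splice_of_not_lt hjk]
    exact hO j (by omega) (by omega)

lemma factor_splice_of_not_lt {k : ℕ} {t : Fin K} (ht : ¬ t.1 < k) {y r y' r' : Fin K → Bool}
    (hY : ∀ j : Fin K, k - m ≤ j.1 + 1 → j.1 < k → y j = y' j) :
    M.a t (splice k y y') * M.b t (splice k y y') (splice k r r') = M.a t y' * M.b t y' r' := by
  have hwindow : ∀ j : Fin K, t.1 + 1 - m ≤ j.1 + 1 → j.1 ≤ t.1 → splice k y y' j = y' j := by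
    intro j hj₁ hj₂
    by_cases hjk : j.1 < k
    · rw [splice_of_lt hjk, hY j (by omega) hjk]
    · exact splice_of_not_lt hjk
  rw [M.a_local t _ _ hwindow, M.b_local t _ _ _ _ (splice_of_not_lt ht) hwindow
    fun j htj _ => obs_splice_of_not_lt (by omega)]

lemma p_splice_mul_p_splice {k : ℕ} {y r y' r' : Fin K → Bool}
    (hY : ∀ j : Fin K, k - m ≤ j.1 + 1 → j.1 < k → y j = y' j)
    (hO : ∀ j : Fin K, k ≤ j.1 → j.1 < k + m → obs y r j = obs y' r' j) :
    M.p (splice k y y') (splice k r r') * M.p (splice k y' y) (splice k r' r)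
      = M.p y r * M.p y' r' := by
  simp only [M.factor, ← Finset.prod_mul_distrib]
  refine Finset.prod_congr rfl fun t _ => ?_
  by_cases ht : t.1 < k
  · rw [M.factor_splice_of_lt ht fun j h₁ h₂ => (hO j h₁ h₂).symm,
      M.factor_splice_of_lt ht hO]
  · rw [M.factor_splice_of_not_lt ht hY,
      M.factor_splice_of_not_lt ht fun j h₁ h₂ => (hY j h₁ h₂).symm, mul_comm]

end Markov

theorem statement2_general (K m : ℕ) (M : Markov K m) (k : ℕ)
    (rv : ℕ → Bool) (ovB : ℕ → Option Bool) (yv : ℕ → Bool) (ovC : ℕ → Option Bool) :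
    cPr M.p (fun y r => Req k k rv y r ∧ Oeq (k + m + 1) (k + m + 1) ovB y r)
        (fun y r => Yeq (k - m) k yv y r ∧ Oeq (k + 1) (k + m) ovC y r)
      = cPr M.p (Req k k rv)
          (fun y r => Yeq (k - m) k yv y r ∧ Oeq (k + 1) (k + m) ovC y r)
        * cPr M.p (Oeq (k + m + 1) (k + m + 1) ovB)
            (fun y r => Yeq (k - m) k yv y r ∧ Oeq (k + 1) (k + m) ovC y r) := by
  refine cPr_and_eq_mul_of_Pr_mul_Pr <| Pr_and_mul_Pr_eq_of_splice M.p k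
    (isPastEvent_Req le_rfl rv) (isFutureEvent_Oeq (by omega) ovB)
    (isPastEvent_Yeq le_rfl yv) (isFutureEvent_Oeq le_rfl ovC) ?_
  rintro y r y' r' ⟨hY, hO⟩ ⟨hY', hO'⟩
  refine M.p_splice_mul_p_splice (fun j h₁ h₂ => ?_) (fun j h₁ h₂ => ?_)
  · rw [hY j h₁ (by omega), hY' j h₁ (by omega)]
  · rw [hO j (by omega) (by omega), hO' j (by omega) (by omega)]

/-- **Lemma 2.** Under the `m`th-order Markov model, for every integer `k` with
`1 ≤ k ≤ K − m − 1`, the response indicator `Rₖ` is conditionally independent of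
`O_{k+m+1}` given `(Ȳ^{m+1}_{k+1}, O̲ᵐₖ) = (Y_{max(1,k−m)}, …, Yₖ, O_{k+1}, …, O_{k+m})`. -/
theorem statement2 (K m : ℕ) (hm : 1 ≤ m) (hKm : 2 * m + 1 < K) (M : Markov K m)
    (k : ℕ) (hk1 : 1 ≤ k) (hk2 : k ≤ K - m - 1)
    (rv : ℕ → Bool) (ovB : ℕ → Option Bool) (yv : ℕ → Bool) (ovC : ℕ → Option Bool)
    (hC : 0 < Pr M.p (fun y r => Yeq (k - m) k yv y r ∧ Oeq (k + 1) (k + m) ovC y r)) :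
    cPr M.p (fun y r => Req k k rv y r ∧ Oeq (k + m + 1) (k + m + 1) ovB y r)
        (fun y r => Yeq (k - m) k yv y r ∧ Oeq (k + 1) (k + m) ovC y r)
      = cPr M.p (Req k k rv)
          (fun y r => Yeq (k - m) k yv y r ∧ Oeq (k + 1) (k + m) ovC y r)
        * cPr M.p (Oeq (k + m + 1) (k + m + 1) ovB)
            (fun y r => Yeq (k - m) k yv y r ∧ Oeq (k + 1) (k + m) ovC y r) :=
  statement2_general K m M k rv ovB yv ovC

end MRM
end

section
/- (Base case of the identification induction, k = 1.) Under the mth-order Markov model together with the exponential tilting restriction, for all values of the variables, f(Y₁, O₂, …, O_{m+2}) = f(O_{m+2}, Y₁ | R₁ = 1, O₂, …, O_{m+1}) · { P(R₁ = 1 | O₂, …, O_{m+1}) + P(R₁ = 0 | O₂, …, O_{m+1}) · exp(α₁ Y₁) / c₁(O₂, …, O_{m+1}; α₁) } · f(O₂, …, O_{m+1}), where c₁(O₂,…,O_{m+1}; α₁) = E[exp(α₁ Y₁) | R₁ = 1, O₂, …, O_{m+1}]. -/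
open scoped Classical BigOperators

namespace MRM

/-!
Let `z` be the first index. In the Markov factorization `R₁` enters only through the factor
`b₁(r₁ | y₁, o₂, …, o_{m+1})`, since every later factor `bₖ` only looks at indices `≥ k`. So on any
event that fixes `Y₁, O₂, …, O_{m+1}` and does not involve `R₁`, turning `R₁ = 1` into `R₁ = 0`
multiplies the probability by one and the same odds `ρ = b₁(0 | ·) / b₁(1 | ·)`. For the events
`{Y₁, O₂, …, O_{m+1}}` and `{Y₁, O₂, …, O_{m+2}}` this makes `O_{m+2}` independent of `R₁` given
`Y₁, O₂, …, O_{m+1}`, and the tilting restriction at `k = 1` identifies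
`ρ = exp(α₁ Y₁) P(R₁ = 0, O₂, …) / (c₁ P(R₁ = 1, O₂, …))`. Splitting the left-hand side along `R₁`
then gives the identity.
-/

open Function

abbrev Event (K : ℕ) := (Fin K → Bool) → (Fin K → Bool) → Prop

def Event.resp {K : ℕ} (E : Event K) (z : Fin K) (i : Bool) : Event K :=
  fun y r => E y r ∧ r z = i

section Probability

variable {K : ℕ} {p : (Fin K → Bool) → (Fin K → Bool) → ℝ}

lemma Pr_congr {E E' : Event K} (h : ∀ y r, E y r ↔ E' y r) : Pr p E = Pr p E' := by
  simp only [Pr, h]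

lemma Pr_pos (hp : ∀ y r, 0 < p y r) {E : Event K} {y₀ r₀ : Fin K → Bool} (h : E y₀ r₀) :
    0 < Pr p E := by
  have hnonneg : ∀ y r, 0 ≤ if E y r then p y r else 0 := fun y r => by
    split_ifs
    exacts [(hp y r).le, le_rfl]
  refine Finset.sum_pos' (fun y _ => Finset.sum_nonneg fun r _ => hnonneg y r)
    ⟨y₀, Finset.mem_univ _, Finset.sum_pos' (fun r _ => hnonneg y₀ r)
      ⟨r₀, Finset.mem_univ _, ?_⟩⟩
  simpa [h] using hp y₀ r₀

lemma Pr_eq_add_resp (E : Event K) (z : Fin K) :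
    Pr p E = Pr p (E.resp z true) + Pr p (E.resp z false) := by
  simp only [Pr, Event.resp, ← Finset.sum_add_distrib]
  refine Finset.sum_congr rfl fun y _ => Finset.sum_congr rfl fun r _ => ?_
  by_cases hE : E y r <;> by_cases hr : r z = true <;> simp [hE, hr]

end Probability

section Events

variable {K : ℕ} {z : Fin K} {y r : Fin K → Bool}

lemma obs_update_of_ne {j : Fin K} (h : j ≠ z) (v : Bool) :
    obs y (update r z v) j = obs y r j := by
  rw [obs, obs, update_of_ne h]

lemma Yeq_one_iff (hz : z.1 = 0) (yv : ℕ → Bool) : Yeq 1 1 yv y r ↔ y z = yv 1 :=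
  ⟨fun h => by simpa [hz] using h z (by omega) (by omega),
    fun h j _ _ => by rw [show j = z from Fin.ext (by omega), h, hz]⟩

lemma Req_one_iff (hz : z.1 = 0) (rv : ℕ → Bool) : Req 1 1 rv y r ↔ r z = rv 1 :=
  ⟨fun h => by simpa [hz] using h z (by omega) (by omega),
    fun h j _ _ => by rw [show j = z from Fin.ext (by omega), h, hz]⟩

lemma Oeq_iff_and_Oeq {lo hi hi' : ℕ} (h : hi + 1 = hi') (hlo : lo ≤ hi')
    (ov : ℕ → Option Bool) :
    Oeq lo hi' ov y r ↔ Oeq lo hi ov y r ∧ Oeq hi' hi' ov y r :=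
  ⟨fun hO => ⟨fun j h₁ h₂ => hO j h₁ (by omega), fun j h₁ h₂ => hO j (by omega) h₂⟩,
    fun ⟨hO, hO'⟩ j h₁ h₂ =>
      if hj : j.1 + 1 ≤ hi then hO j h₁ hj else hO' j (by omega) h₂⟩

lemma Oeq_update_first_iff (hz : z.1 = 0) {lo hi : ℕ} (hlo : 2 ≤ lo) (ov : ℕ → Option Bool)
    (v : Bool) : Oeq lo hi ov y (update r z v) ↔ Oeq lo hi ov y r := by
  have hne : ∀ j : Fin K, lo ≤ j.1 + 1 → j ≠ z := fun j hj e => by subst e; omega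
  exact forall_congr' fun j => imp_congr_right fun hj => by rw [obs_update_of_ne (hne j hj)]

/-- `Y₁ = yv 1` and `(O₂, …, O_{m+1}) = (ov 2, …, ov (m + 1))`, for `z` the first index. -/
def firstWindow (z : Fin K) (m : ℕ) (yv : ℕ → Bool) (ov : ℕ → Option Bool) : Event K :=
  fun y r => y z = yv 1 ∧ Oeq 2 (m + 1) ov y r

lemma firstWindow_update_first_iff (hz : z.1 = 0) {m : ℕ} {yv : ℕ → Bool}
    {ov : ℕ → Option Bool} {v : Bool} :
    firstWindow z m yv ov y (update r z v) ↔ firstWindow z m yv ov y r := by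
  rw [firstWindow, firstWindow, Oeq_update_first_iff hz le_rfl]

lemma Pr_Yeq_one_and_Oeq (hz : z.1 = 0) (p : (Fin K → Bool) → (Fin K → Bool) → ℝ) (m : ℕ)
    (yv : ℕ → Bool) (ov : ℕ → Option Bool) :
    Pr p (fun y r => Yeq 1 1 yv y r ∧ Oeq 2 (m + 2) ov y r)
      = Pr p (fun y r => firstWindow z m yv ov y r ∧ Oeq (m + 2) (m + 2) ov y r) :=
  Pr_congr fun y r => by
    rw [firstWindow, Yeq_one_iff hz, Oeq_iff_and_Oeq (by omega : m + 1 + 1 = m + 2) (by omega),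
      and_assoc]

lemma cPr_Oeq_Yeq_one_Req_one (hz : z.1 = 0) (p : (Fin K → Bool) → (Fin K → Bool) → ℝ) (m : ℕ)
    (yv : ℕ → Bool) (ov : ℕ → Option Bool) :
    cPr p (fun y r => Oeq (m + 2) (m + 2) ov y r ∧ Yeq 1 1 yv y r)
        (fun y r => Req 1 1 (fun _ => true) y r ∧ Oeq 2 (m + 1) ov y r)
      = Pr p (Event.resp (fun y r => firstWindow z m yv ov y r ∧ Oeq (m + 2) (m + 2) ov y r)
          z true)
        / Pr p (Event.resp (Oeq 2 (m + 1) ov) z true) := by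
  unfold cPr
  congr 1 <;> exact Pr_congr fun y r => by
    simp only [Event.resp, firstWindow, Yeq_one_iff hz, Req_one_iff hz]
    tauto

lemma cPr_Req_one (hz : z.1 = 0) (p : (Fin K → Bool) → (Fin K → Bool) → ℝ) (E : Event K)
    (i : Bool) : cPr p (Req 1 1 (fun _ => i)) E = Pr p (E.resp z i) / Pr p E := by
  unfold cPr
  congr 1
  exact Pr_congr fun y r => by rw [Event.resp, Req_one_iff hz, and_comm]

lemma cPr_Yeq_one_Req_one (hz : z.1 = 0) (p : (Fin K → Bool) → (Fin K → Bool) → ℝ) (m : ℕ)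
    (yv : ℕ → Bool) (ov : ℕ → Option Bool) (i : Bool) :
    cPr p (Yeq 1 1 yv)
        (fun y r => Req 1 1 (fun _ => i) y r ∧ Yeq (1 - m) (1 - 1) yv y r ∧
          Oeq (1 + 1) (1 + m) ov y r)
      = Pr p ((firstWindow z m yv ov).resp z i) / Pr p (Event.resp (Oeq 2 (m + 1) ov) z i) := by
  unfold cPr
  rw [Nat.add_comm 1 m]
  congr 1 <;> exact Pr_congr fun y r => by
    simp only [Event.resp, firstWindow, Yeq_one_iff hz, Req_one_iff hz]
    tauto

/-- A configuration with `Y_z = c`, `R_z = i` and observed data `ov` at every other index. -/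
def fillY (ov : ℕ → Option Bool) (c : Bool) (j : Fin K) : Bool :=
  if j.1 = 0 then c else (ov (j.1 + 1)).getD false

def fillR (ov : ℕ → Option Bool) (i : Bool) (j : Fin K) : Bool :=
  if j.1 = 0 then i else (ov (j.1 + 1)).isSome

lemma obs_fill (ov : ℕ → Option Bool) (c i : Bool) {j : Fin K} (hj : j.1 ≠ 0) :
    obs (fillY ov c) (fillR ov i) j = ov (j.1 + 1) := by
  simp only [obs, fillY, fillR, hj, if_false]
  cases ov (j.1 + 1) <;> rfl

lemma firstWindow_fill_resp (hz : z.1 = 0) (m : ℕ) (yv : ℕ → Bool) (ov : ℕ → Option Bool)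
    (i : Bool) : (firstWindow z m yv ov).resp z i (fillY ov (yv 1)) (fillR ov i) :=
  ⟨⟨if_pos hz, fun j _ _ => obs_fill ov _ _ (by omega)⟩, if_pos hz⟩

end Events

namespace Markov

variable {K m : ℕ} (M : Markov K m) {z : Fin K}

lemma p_pos (y r : Fin K → Bool) : 0 < M.p y r := by
  rw [M.factor]
  exact Finset.prod_pos fun k _ => mul_pos (M.a_pos k y) (M.b_pos k y r)

lemma b_update_first_of_ne (hz : z.1 = 0) {k : Fin K} (hk : k ≠ z) (y r : Fin K → Bool)
    (v : Bool) : M.b k y (update r z v) = M.b k y r :=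
  M.b_local k y _ y r (update_of_ne hk _ _) (fun _ _ _ => rfl)
    fun _ hj _ => obs_update_of_ne (fun e => by subst e; omega) v

lemma p_update_first_mul (hz : z.1 = 0) (y r : Fin K → Bool) (v : Bool) :
    M.p y (update r z v) * M.b z y r = M.p y r * M.b z y (update r z v) := by
  have hrest : ∏ k ∈ Finset.univ.erase z, M.a k y * M.b k y (update r z v)
      = ∏ k ∈ Finset.univ.erase z, M.a k y * M.b k y r :=
    Finset.prod_congr rfl fun k hk => by
      rw [M.b_update_first_of_ne hz (Finset.ne_of_mem_erase hk)]
  rw [M.factor, M.factor, ← Finset.prod_erase_mul _ _ (Finset.mem_univ z),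
    ← Finset.prod_erase_mul _ _ (Finset.mem_univ z), hrest]
  ring

lemma b_first_congr (hz : z.1 = 0) {y r y' r' : Fin K → Bool} (hy : y z = y' z)
    (hr : r z = r' z) (hobs : ∀ j : Fin K, 1 ≤ j.1 → j.1 ≤ m → obs y r j = obs y' r' j) :
    M.b z y r = M.b z y' r' :=
  M.b_local z y r y' r' hr
    (fun j _ hj => by rwa [show j = z from Fin.ext (by omega)])
    fun j hj₁ hj₂ => hobs j (by omega) (by omega)

lemma Pr_Oeq_resp_pos (hz : z.1 = 0) (ov : ℕ → Option Bool) (i : Bool) :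
    0 < Pr M.p (Event.resp (Oeq 2 (m + 1) ov) z i) :=
  Pr_pos M.p_pos (y₀ := fillY ov true) (r₀ := fillR ov i)
    ⟨fun j _ _ => obs_fill ov _ _ (by omega), if_pos hz⟩

noncomputable def missOdds (z : Fin K) (y r : Fin K → Bool) : ℝ :=
  M.b z y (update r z false) / M.b z y (update r z true)

lemma Pr_resp_false_eq (hz : z.1 = 0) {E : Event K} (y₀ r₀ : Fin K → Bool)
    (hE_update : ∀ y r v, E y (update r z v) ↔ E y r)
    (hE : ∀ y r, E y r →
      y z = y₀ z ∧ ∀ j : Fin K, 1 ≤ j.1 → j.1 ≤ m → obs y r j = obs y₀ r₀ j) :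
    Pr M.p (E.resp z false) = M.missOdds z y₀ r₀ * Pr M.p (E.resp z true) := by
  have hflip : Involutive fun r : Fin K → Bool => update r z (!r z) := fun r => by simp
  simp only [Pr, Event.resp, Finset.mul_sum]
  refine Finset.sum_congr rfl fun y _ => ?_
  rw [← Equiv.sum_comp (hflip.toPerm _)]
  refine Finset.sum_congr rfl fun r _ => ?_
  simp only [Involutive.coe_toPerm, update_self, hE_update]
  by_cases hr : r z = true
  swap
  · simp [hr]
  by_cases hEyr : E y r
  swap
  · simp [hEyr]
  obtain ⟨hy, hobs⟩ := hE y r hEyr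
  have hobs_update : ∀ v, ∀ j : Fin K, 1 ≤ j.1 → j.1 ≤ m →
      obs y (update r z v) j = obs y₀ (update r₀ z v) j := fun v j h₁ h₂ => by
    have hj : j ≠ z := fun e => by subst e; omega
    rw [obs_update_of_ne hj, obs_update_of_ne hj, hobs j h₁ h₂]
  have hb_true : M.b z y r = M.b z y₀ (update r₀ z true) := by
    rw [← update_eq_self z r, hr]
    exact M.b_first_congr hz hy (by simp) (hobs_update true)
  have hb_false : M.b z y (update r z false) = M.b z y₀ (update r₀ z false) :=
    M.b_first_congr hz hy (by simp) (hobs_update false)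
  have hmul := M.p_update_first_mul hz y r false
  rw [hb_true, hb_false] at hmul
  simp only [hr, hEyr, Bool.not_true, and_self, if_true, missOdds]
  rw [div_mul_eq_mul_div, eq_div_iff (M.b_pos _ _ _).ne', mul_comm _ (M.p y r), ← hmul]

lemma Pr_resp_false_eq_of_firstWindow (hz : z.1 = 0) (yv : ℕ → Bool) (ov : ℕ → Option Bool)
    {E : Event K} (hE_update : ∀ y r v, E y (update r z v) ↔ E y r)
    (hE : ∀ y r, E y r → firstWindow z m yv ov y r) :
    Pr M.p (E.resp z false)
      = M.missOdds z (fillY ov (yv 1)) (fillR ov true) * Pr M.p (E.resp z true) := by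
  refine M.Pr_resp_false_eq hz _ _ hE_update fun y r hEyr => ?_
  obtain ⟨⟨hy, hO⟩, -⟩ := firstWindow_fill_resp (K := K) hz m yv ov true
  obtain ⟨hy', hO'⟩ := hE y r hEyr
  exact ⟨hy'.trans hy.symm,
    fun j h₁ h₂ => (hO' j (by omega) (by omega)).trans (hO j (by omega) (by omega)).symm⟩

lemma missOdds_eq_of_tilt (hz : z.1 = 0) {α : ℕ → ℝ} (hT : Tilt M.p m α) (yv : ℕ → Bool)
    (ov : ℕ → Option Bool) :
    M.missOdds z (fillY ov (yv 1)) (fillR ov true)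
      = Pr M.p (Event.resp (Oeq 2 (m + 1) ov) z false) * Real.exp (α 1 * yVal (yv 1))
        / (Pr M.p (Event.resp (Oeq 2 (m + 1) ov) z true) * cfun M.p m (α 1) 1 yv ov) := by
  have hT₁ := hT 1 le_rfl (by omega) yv ov
  rw [cPr_Yeq_one_Req_one hz, cPr_Yeq_one_Req_one hz,
    M.Pr_resp_false_eq_of_firstWindow hz yv ov (fun _ _ _ => firstWindow_update_first_iff hz)
      fun _ _ => id] at hT₁
  set ρ := M.missOdds z (fillY ov (yv 1)) (fillR ov true)
  set w := Pr M.p ((firstWindow z m yv ov).resp z true)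
  set u₀ := Pr M.p (Event.resp (Oeq 2 (m + 1) ov) z false)
  have hw : 0 < w := Pr_pos M.p_pos (firstWindow_fill_resp hz m yv ov true)
  have hu₀ : 0 < u₀ := M.Pr_Oeq_resp_pos hz ov false
  calc ρ = ρ * w / u₀ * u₀ / w := by field_simp
    _ = _ := by
        rw [hT₁]
        field_simp

end Markov

theorem statement6_general (K m : ℕ) (hKm : 2 * m + 1 < K)
    (M : Markov K m) (α : ℕ → ℝ) (hT : Tilt M.p m α)
    (yv : ℕ → Bool) (ov : ℕ → Option Bool) :
    Pr M.p (fun y r => Yeq 1 1 yv y r ∧ Oeq 2 (m + 2) ov y r)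
      = cPr M.p (fun y r => Oeq (m + 2) (m + 2) ov y r ∧ Yeq 1 1 yv y r)
          (fun y r => Req 1 1 (fun _ => true) y r ∧ Oeq 2 (m + 1) ov y r)
        * (cPr M.p (Req 1 1 (fun _ => true)) (Oeq 2 (m + 1) ov)
            + cPr M.p (Req 1 1 (fun _ => false)) (Oeq 2 (m + 1) ov)
              * Real.exp (α 1 * yVal (yv 1)) / cfun M.p m (α 1) 1 yv ov)
        * Pr M.p (Oeq 2 (m + 1) ov) := by
  set z : Fin K := ⟨0, by omega⟩
  have hz : z.1 = 0 := rfl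
  have hu₁ := M.Pr_Oeq_resp_pos hz ov true
  have hu₀ := M.Pr_Oeq_resp_pos hz ov false
  rw [Pr_Yeq_one_and_Oeq hz, Pr_eq_add_resp _ z, cPr_Oeq_Yeq_one_Req_one hz, cPr_Req_one hz,
    cPr_Req_one hz, Pr_eq_add_resp (Oeq 2 (m + 1) ov) z,
    M.Pr_resp_false_eq_of_firstWindow hz yv ov
      (fun _ _ _ => and_congr (firstWindow_update_first_iff hz)
        (Oeq_update_first_iff hz (by omega) ov _)) fun _ _ => And.left,
    M.missOdds_eq_of_tilt hz hT]
  field_simp [hu₁.ne', (add_pos hu₁ hu₀).ne']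

/-- Base case of the identification induction, `k = 1`.  Under the
`m`th-order Markov model together with the exponential tilting restriction,
`f(Y₁, O₂, …, O_{m+2})
  = f(O_{m+2}, Y₁ | R₁ = 1, O₂, …, O_{m+1})
    · { P(R₁ = 1 | O₂, …, O_{m+1}) + P(R₁ = 0 | O₂, …, O_{m+1}) · exp(α₁ Y₁) / c₁ }
    · f(O₂, …, O_{m+1})`,
where `c₁(O₂,…,O_{m+1}; α₁) = E[exp(α₁ Y₁) | R₁ = 1, O₂, …, O_{m+1}]` (this is
`cfun M.p m (α 1) 1 yv ov`). -/
theorem statement6 (K m : ℕ) (hm : 1 ≤ m) (hKm : 2 * m + 1 < K)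
    (M : Markov K m) (α : ℕ → ℝ) (hT : Tilt M.p m α)
    (yv : ℕ → Bool) (ov : ℕ → Option Bool) :
    Pr M.p (fun y r => Yeq 1 1 yv y r ∧ Oeq 2 (m + 2) ov y r)
      = cPr M.p (fun y r => Oeq (m + 2) (m + 2) ov y r ∧ Yeq 1 1 yv y r)
          (fun y r => Req 1 1 (fun _ => true) y r ∧ Oeq 2 (m + 1) ov y r)
        * (cPr M.p (Req 1 1 (fun _ => true)) (Oeq 2 (m + 1) ov)
            + cPr M.p (Req 1 1 (fun _ => false)) (Oeq 2 (m + 1) ov)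
              * Real.exp (α 1 * yVal (yv 1)) / cfun M.p m (α 1) 1 yv ov)
        * Pr M.p (Oeq 2 (m + 1) ov) :=
  statement6_general K m hKm M α hT yv ov

end MRM
end
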